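/- arXiv:1905.00113 — 4 statements merged into one kernel-verified Lean document; each statement's English description precedes it below -/
import Mathlib

section
/- If Φ = (φₙ) is a frame for a separable Hilbert space H with lower frame bound m_Φ, and Ψ = (ψₙ) is a Bessel sequence in H whose synthesis operator T_Ψ satisfies ‖T_Φ − T_Ψ‖ ≤ μ for some μ < √m_Φ, then Ψ is a frame for H with lower frame bound (√m_Φ − μ)² and upper frame bound (√M_Φ + μ)². -/
open ContinuousLinearMap MeasureTheory
open scoped InnerProductSpace ComplexConjugate

noncomputable section

notation "ℓ²" => lp (fun _ : ℕ => ℂ) 2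

variable {H : Type} [NormedAddCommGroup H] [InnerProductSpace ℂ H] [CompleteSpace H]

/-- `Φ = (φₙ)` is a frame for `H` with lower bound `m` and upper bound `M`. -/
def IsFrame (φ : ℕ → H) (m M : ℝ) : Prop :=
  0 < m ∧ 0 < M ∧ ∀ f : H,
    m * ‖f‖ ^ 2 ≤ ∑' n, ‖(inner ℂ (φ n) f : ℂ)‖ ^ 2 ∧
    ∑' n, ‖(inner ℂ (φ n) f : ℂ)‖ ^ 2 ≤ M * ‖f‖ ^ 2

/-- `Φ = (φₙ)` is a Bessel sequence with bound `M`. -/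
def IsBessel (φ : ℕ → H) (M : ℝ) : Prop :=
  0 < M ∧ ∀ f : H, ∑' n, ‖(inner ℂ (φ n) f : ℂ)‖ ^ 2 ≤ M * ‖f‖ ^ 2

/-- `U` is the analysis operator of the sequence `Φ = (φₙ)`, i.e. `U f = (⟨f, φₙ⟩)ₙ`. -/
def IsAnalysis (φ : ℕ → H) (U : H →L[ℂ] ℓ²) : Prop :=
  ∀ (f : H) (n : ℕ), U f n = (inner ℂ (φ n) f : ℂ)

/-- Orthogonal projection onto a closed submodule, as an endomorphism. -/
def orthProj {E : Type} [NormedAddCommGroup E] [InnerProductSpace ℂ E] [CompleteSpace E]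
    (K : Submodule ℂ E) (hK : IsClosed (K : Set E)) : E →L[ℂ] E :=
  haveI := hK.completeSpace_coe
  K.subtypeL.comp K.orthogonalProjectionOnto

/-- Orthogonal projection onto a closed submodule, with values in the submodule. -/
def orthProjTo {E : Type} [NormedAddCommGroup E] [InnerProductSpace ℂ E] [CompleteSpace E]
    (K : Submodule ℂ E) (hK : IsClosed (K : Set E)) : E →L[ℂ] K :=
  haveI := hK.completeSpace_coe
  K.orthogonalProjectionOnto

/-- The gap `δ(X, Y) = ‖(Id - P_Y)|_X‖` from `X` to a closed subspace `Y`. -/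
def gap {E : Type} [NormedAddCommGroup E] [InnerProductSpace ℂ E] [CompleteSpace E]
    (X Y : Submodule ℂ E) (hY : IsClosed (Y : Set E)) : ℝ :=
  ‖(ContinuousLinearMap.id ℂ E - orthProj Y hY).comp X.subtypeL‖

/-! The frame inequalities say `√m ‖f‖ ≤ ‖U f‖ ≤ √M ‖f‖` for the analysis operator `U`; since the
adjoint is an isometry, `‖U_Φ - U_Ψ‖ = ‖T_Φ - T_Ψ‖ ≤ μ`, and the reverse triangle inequality moves
both bounds from `U_Φ f` to `U_Ψ f` at the cost of `μ ‖f‖`. -/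

namespace IsAnalysis

variable {E : Type} [NormedAddCommGroup E] [InnerProductSpace ℂ E] {χ : ℕ → E} {U : E →L[ℂ] ℓ²}

theorem tsum_norm_inner_sq_eq (hU : IsAnalysis χ U) (f : E) :
    ∑' n, ‖(inner ℂ (χ n) f : ℂ)‖ ^ 2 = ‖U f‖ ^ 2 := by
  have h := lp.norm_rpow_eq_tsum (p := 2) (by norm_num) (U f)
  simp only [ENNReal.toReal_ofNat, Real.rpow_two] at h
  rw [h]
  exact tsum_congr fun n => by rw [hU f n]

theorem isFrame_sq_iff (hU : IsAnalysis χ U) {a b : ℝ} (ha : 0 < a) (hb : 0 < b) :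
    IsFrame χ (a ^ 2) (b ^ 2) ↔ ∀ f, a * ‖f‖ ≤ ‖U f‖ ∧ ‖U f‖ ≤ b * ‖f‖ := by
  have hsq {x y : ℝ} (hx : 0 ≤ x) (hy : 0 ≤ y) : x ^ 2 ≤ y ^ 2 ↔ x ≤ y :=
    pow_le_pow_iff_left₀ hx hy two_ne_zero
  simp only [IsFrame, hU.tsum_norm_inner_sq_eq, ← mul_pow, pow_pos ha, pow_pos hb, true_and]
  refine forall_congr' fun f => and_congr (hsq ?_ ?_) (hsq ?_ ?_) <;> positivity

end IsAnalysis

theorem stmt0_general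
    (φ ψ : ℕ → H) (mΦ MΦ μ : ℝ)
    (UΦ UΨ : H →L[ℂ] ℓ²) (TΦ TΨ : ℓ² →L[ℂ] H)
    (hUΦ : IsAnalysis φ UΦ) (hUΨ : IsAnalysis ψ UΨ)
    (hTΦ : TΦ = adjoint UΦ) (hTΨ : TΨ = adjoint UΨ)
    (hΦ : IsFrame φ mΦ MΦ)
    (hμ : μ < Real.sqrt mΦ) (hper : ‖TΦ - TΨ‖ ≤ μ) :
    IsFrame ψ ((Real.sqrt mΦ - μ) ^ 2) ((Real.sqrt MΦ + μ) ^ 2) := by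
  have hsm : 0 < Real.sqrt mΦ := Real.sqrt_pos.2 hΦ.1
  have hsM : 0 < Real.sqrt MΦ := Real.sqrt_pos.2 hΦ.2.1
  have hboundsΦ := (hUΦ.isFrame_sq_iff hsm hsM).1 <| by
    rwa [Real.sq_sqrt hΦ.1.le, Real.sq_sqrt hΦ.2.1.le]
  have hUΦΨ : ‖UΦ - UΨ‖ ≤ μ := by rwa [← adjoint.norm_map, map_sub, ← hTΦ, ← hTΨ]
  have hμ0 : 0 ≤ μ := (norm_nonneg _).trans hUΦΨ
  refine (hUΨ.isFrame_sq_iff (sub_pos.2 hμ) (by positivity)).2 fun f => ?_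
  have hdiff : ‖UΦ f - UΨ f‖ ≤ μ * ‖f‖ := (UΦ - UΨ).le_of_opNorm_le hUΦΨ f
  obtain ⟨hlo, hhi⟩ := abs_le.1 ((abs_norm_sub_norm_le (UΦ f) (UΨ f)).trans hdiff)
  obtain ⟨hloΦ, hhiΦ⟩ := hboundsΦ f
  constructor <;> linarith [sub_mul (Real.sqrt mΦ) μ ‖f‖, add_mul (Real.sqrt MΦ) μ ‖f‖]

theorem stmt0
    (φ ψ : ℕ → H) (mΦ MΦ MΨ μ : ℝ)
    (UΦ UΨ : H →L[ℂ] ℓ²) (TΦ TΨ : ℓ² →L[ℂ] H)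
    (hUΦ : IsAnalysis φ UΦ) (hUΨ : IsAnalysis ψ UΨ)
    (hTΦ : TΦ = adjoint UΦ) (hTΨ : TΨ = adjoint UΨ)
    (hΦ : IsFrame φ mΦ MΦ) (hΨ : IsBessel ψ MΨ)
    (hμ : μ < Real.sqrt mΦ) (hper : ‖TΦ - TΨ‖ ≤ μ) :
    IsFrame ψ ((Real.sqrt mΦ - μ) ^ 2) ((Real.sqrt MΦ + μ) ^ 2) :=
  stmt0_general φ ψ mΦ MΦ μ UΦ UΨ TΦ TΨ hUΦ hUΨ hTΦ hTΨ hΦ hμ hper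
end
end

section
/- Let Φ be a frame for H with lower bound m_Φ and let Ψ be a Bessel sequence in H. Then the gap δ(R(U_Φ), closure of R(U_Ψ)) from the range of the analysis operator of Φ to the closure of the range of the analysis operator of Ψ satisfies δ(R(U_Φ), cl R(U_Ψ)) ≤ ‖T_Φ − T_Ψ‖ / √m_Φ. -/
/-!
The orthogonal projection onto `Y = cl R(U_Ψ)` is a best approximation, so the distance from
`U_Φ f` to `Y` is at most `‖U_Φ f - U_Ψ f‖ ≤ ‖U_Φ - U_Ψ‖ ‖f‖`, and the lower frame bound gives
`√m_Φ ‖f‖ ≤ ‖U_Φ f‖`. Finally `‖T_Φ - T_Ψ‖ = ‖U_Φ - U_Ψ‖` because taking adjoints is isometric.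
-/

open ContinuousLinearMap MeasureTheory
open scoped InnerProductSpace ComplexConjugate

noncomputable section

variable {H : Type} [NormedAddCommGroup H] [InnerProductSpace ℂ H] [CompleteSpace H]

theorem norm_sub_orthProj_le {E : Type} [NormedAddCommGroup E] [InnerProductSpace ℂ E]
    [CompleteSpace E] {K : Submodule ℂ E} (hK : IsClosed (K : Set E)) (x : E) {z : E}
    (hz : z ∈ K) : ‖x - orthProj K hK x‖ ≤ ‖x - z‖ := by
  have := hK.completeSpace_coe
  change ‖x - K.starProjection x‖ ≤ _
  rw [Submodule.starProjection_minimal]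
  exact ciInf_le ⟨0, by rintro _ ⟨w, rfl⟩; positivity⟩ (⟨z, hz⟩ : K)

theorem gap_range_le_of_range_le {G E : Type} [NormedAddCommGroup G] [NormedSpace ℂ G]
    [NormedAddCommGroup E] [InnerProductSpace ℂ E] [CompleteSpace E]
    (A B : G →L[ℂ] E) {c : ℝ} (hc : 0 < c) (hA : ∀ f, c * ‖f‖ ≤ ‖A f‖)
    {Y : Submodule ℂ E} (hY : IsClosed (Y : Set E)) (hB : LinearMap.range (B : G →ₗ[ℂ] E) ≤ Y) :
    gap (LinearMap.range (A : G →ₗ[ℂ] E)) Y hY ≤ ‖A - B‖ / c := by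
  refine ContinuousLinearMap.opNorm_le_bound _ (by positivity) ?_
  rintro ⟨_, f, rfl⟩
  calc ‖A f - orthProj Y hY (A f)‖
      ≤ ‖A f - B f‖ := norm_sub_orthProj_le hY _ (hB ⟨f, rfl⟩)
    _ ≤ ‖A - B‖ * ‖f‖ := (A - B).le_opNorm f
    _ ≤ ‖A - B‖ * (‖A f‖ / c) := by gcongr; rw [le_div_iff₀ hc, mul_comm]; exact hA f
    _ = ‖A - B‖ / c * ‖A f‖ := by ring

theorem IsAnalysis.norm_sq_eq_tsum {E : Type} [NormedAddCommGroup E] [InnerProductSpace ℂ E]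
    {φ : ℕ → E} {U : E →L[ℂ] ℓ²} (hU : IsAnalysis φ U) (f : E) :
    ‖U f‖ ^ 2 = ∑' n, ‖(inner ℂ (φ n) f : ℂ)‖ ^ 2 := by
  simpa only [ENNReal.toReal_ofNat, Real.rpow_two, hU f] using
    lp.norm_rpow_eq_tsum (p := 2) (by norm_num) (U f)

theorem IsFrame.sqrt_mul_norm_le {E : Type} [NormedAddCommGroup E] [InnerProductSpace ℂ E]
    {φ : ℕ → E} {m M : ℝ} (hφ : IsFrame φ m M) {U : E →L[ℂ] ℓ²} (hU : IsAnalysis φ U) (f : E) :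
    Real.sqrt m * ‖f‖ ≤ ‖U f‖ := by
  have h := (hφ.2.2 f).1
  rw [← hU.norm_sq_eq_tsum] at h
  rw [← Real.sqrt_sq (norm_nonneg (U f)), ← Real.sqrt_sq (norm_nonneg f), ← Real.sqrt_mul hφ.1.le]
  exact Real.sqrt_le_sqrt h

theorem stmt1_general
    (φ : ℕ → H) (mΦ MΦ : ℝ)
    (UΦ UΨ : H →L[ℂ] ℓ²) (TΦ TΨ : ℓ² →L[ℂ] H)
    (hUΦ : IsAnalysis φ UΦ)
    (hTΦ : TΦ = adjoint UΦ) (hTΨ : TΨ = adjoint UΨ)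
    (hΦ : IsFrame φ mΦ MΦ) :
    gap (LinearMap.range (UΦ : H →ₗ[ℂ] ℓ²)) ((LinearMap.range (UΨ : H →ₗ[ℂ] ℓ²)).topologicalClosure)
        (Submodule.isClosed_topologicalClosure _)
      ≤ ‖TΦ - TΨ‖ / Real.sqrt mΦ := by
  have hnorm : ‖TΦ - TΨ‖ = ‖UΦ - UΨ‖ := by
    rw [hTΦ, hTΨ, ← map_sub, LinearIsometryEquiv.norm_map]
  rw [hnorm]
  exact gap_range_le_of_range_le UΦ UΨ (Real.sqrt_pos.mpr hΦ.1) (hΦ.sqrt_mul_norm_le hUΦ) _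
    (Submodule.le_topologicalClosure _)

theorem stmt1
    (φ ψ : ℕ → H) (mΦ MΦ MΨ : ℝ)
    (UΦ UΨ : H →L[ℂ] ℓ²) (TΦ TΨ : ℓ² →L[ℂ] H)
    (hUΦ : IsAnalysis φ UΦ) (hUΨ : IsAnalysis ψ UΨ)
    (hTΦ : TΦ = adjoint UΦ) (hTΨ : TΨ = adjoint UΨ)
    (hΦ : IsFrame φ mΦ MΦ) (hΨ : IsBessel ψ MΨ) :
    gap (LinearMap.range (UΦ : H →ₗ[ℂ] ℓ²)) ((LinearMap.range (UΨ : H →ₗ[ℂ] ℓ²)).topologicalClosure)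
        (Submodule.isClosed_topologicalClosure _)
      ≤ ‖TΦ - TΨ‖ / Real.sqrt mΦ :=
  stmt1_general φ mΦ MΦ UΦ UΨ TΦ TΨ hUΦ hTΦ hTΨ hΦ

end
end

section
/- Let Φ be a frame for H with lower bound m_Φ and let Ψ be a Bessel sequence with ‖T_Φ − T_Ψ‖ ≤ μ < √m_Φ. Then ‖P_{R(U_Φ)} − P_{R(U_Ψ)}‖ ≤ μ/(√m_Φ − μ), where P_X denotes orthogonal projection onto the closed range of the analysis operator. -/
open ContinuousLinearMap MeasureTheory
open scoped InnerProductSpace ComplexConjugate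

noncomputable section

variable {H : Type} [NormedAddCommGroup H] [InnerProductSpace ℂ H] [CompleteSpace H]

/-! Since the adjoint is isometric, `‖U_Φ - U_Ψ‖ = ‖T_Φ - T_Ψ‖ ≤ μ`, and both analysis operators
are bounded below by `√m_Φ - μ`. So `U_Ψ f` lies within `μ ‖f‖ ≤ c ‖U_Ψ f‖` of `U_Φ f ∈ R(U_Φ)`,
where `c = μ / (√m_Φ - μ)`, and symmetrically: each closed range is within relative distance `c`
of the other. For orthogonal projections `P`, `Q` onto two such subspaces,
`(P - Q) z = P (z - Q z) - (I - P) (Q z)` is an orthogonal sum whose parts are bounded by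
`c ‖z - Q z‖` (as `z - Q z ⊥ R(Q)`) and `c ‖Q z‖`, whence `‖P - Q‖ ≤ c`. -/

namespace Submodule

variable {𝕜 E : Type*} [RCLike 𝕜] [NormedAddCommGroup E] [InnerProductSpace 𝕜 E]
  {X Y : Submodule 𝕜 E} [X.HasOrthogonalProjection] [Y.HasOrthogonalProjection] {c : ℝ}

theorem norm_starProjection_le_of_mem_orthogonal (hc : 0 ≤ c)
    (hXY : ∀ x ∈ X, ‖x - Y.starProjection x‖ ≤ c * ‖x‖) {w : E} (hw : w ∈ Yᗮ) :
    ‖X.starProjection w‖ ≤ c * ‖w‖ := by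
  set p := X.starProjection w
  have hp : ‖p‖ ^ 2 ≤ c * ‖w‖ * ‖p‖ :=
    calc ‖p‖ ^ 2 = RCLike.re ⟪p, w⟫_𝕜 := (X.re_inner_starProjection_eq_normSq w).symm
      _ = RCLike.re ⟪p - Y.starProjection p, w⟫_𝕜 := by
        rw [inner_sub_left, inner_right_of_mem_orthogonal (Y.starProjection_apply_mem p) hw,
          sub_zero]
      _ ≤ ‖p - Y.starProjection p‖ * ‖w‖ := (RCLike.re_le_norm _).trans (norm_inner_le_norm _ _)
      _ ≤ c * ‖p‖ * ‖w‖ := by gcongr; exact hXY p (X.starProjection_apply_mem w)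
      _ = c * ‖w‖ * ‖p‖ := by ring
  rcases (norm_nonneg p).eq_or_lt with h0 | h0
  · rw [← h0]; positivity
  · exact le_of_mul_le_mul_right (by nlinarith) h0

theorem norm_starProjection_sub_starProjection_le (hc : 0 ≤ c)
    (hXY : ∀ x ∈ X, ‖x - Y.starProjection x‖ ≤ c * ‖x‖)
    (hYX : ∀ y ∈ Y, ‖y - X.starProjection y‖ ≤ c * ‖y‖) :
    ‖X.starProjection - Y.starProjection‖ ≤ c := by
  refine ContinuousLinearMap.opNorm_le_bound _ hc fun z => ?_
  set Q := Y.starProjection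
  have hsplit : (X.starProjection - Q) z =
      X.starProjection (z - Q z) - (Q z - X.starProjection (Q z)) := by
    simp only [sub_apply, map_sub]; abel
  have horth : ⟪X.starProjection (z - Q z), Q z - X.starProjection (Q z)⟫_𝕜 = 0 :=
    inner_right_of_mem_orthogonal (X.starProjection_apply_mem _)
      (X.sub_starProjection_mem_orthogonal _)
  have h1 : ‖X.starProjection (z - Q z)‖ ≤ c * ‖z - Q z‖ :=
    norm_starProjection_le_of_mem_orthogonal hc hXY (Y.sub_starProjection_mem_orthogonal z)
  have h2 : ‖Q z - X.starProjection (Q z)‖ ≤ c * ‖Q z‖ := hYX _ (Y.starProjection_apply_mem z)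
  have hpyth : ‖z‖ ^ 2 = ‖Q z‖ ^ 2 + ‖z - Q z‖ ^ 2 := by
    rw [← Y.starProjection_orthogonal_val]; exact Y.norm_sq_eq_add_norm_sq_starProjection z
  refine le_of_pow_le_pow_left₀ two_ne_zero (by positivity) ?_
  calc ‖(X.starProjection - Q) z‖ ^ 2
      = ‖X.starProjection (z - Q z)‖ ^ 2 + ‖Q z - X.starProjection (Q z)‖ ^ 2 := by
        rw [hsplit, @norm_sub_sq 𝕜, horth, map_zero, mul_zero, sub_zero]
    _ ≤ (c * ‖z - Q z‖) ^ 2 + (c * ‖Q z‖) ^ 2 := by gcongr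
    _ = (c * ‖z‖) ^ 2 := by rw [mul_pow, mul_pow, mul_pow, hpyth]; ring

end Submodule

theorem orthProj_eq_starProjection {E : Type} [NormedAddCommGroup E] [InnerProductSpace ℂ E]
    [CompleteSpace E] (K : Submodule ℂ E) (hK : IsClosed (K : Set E))
    [K.HasOrthogonalProjection] : orthProj K hK = K.starProjection :=
  rfl

theorem lp.norm_sq_eq_tsum {ι : Type*} {G : ι → Type*} [∀ i, NormedAddCommGroup (G i)]
    (f : lp G 2) : ‖f‖ ^ 2 = ∑' i, ‖f i‖ ^ 2 := by
  simpa only [ENNReal.toReal_ofNat, Real.rpow_two] using lp.norm_rpow_eq_tsum (by norm_num) f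

theorem IsAnalysis.norm_sq_apply {E : Type} [NormedAddCommGroup E] [InnerProductSpace ℂ E]
    [CompleteSpace E] {φ : ℕ → E} {U : E →L[ℂ] ℓ²} (hU : IsAnalysis φ U) (f : E) :
    ‖U f‖ ^ 2 = ∑' n, ‖(inner ℂ (φ n) f : ℂ)‖ ^ 2 := by
  simp only [lp.norm_sq_eq_tsum, hU f]

theorem IsFrame.sqrt_mul_norm_le_norm_apply {φ : ℕ → H} {m M : ℝ} (hΦ : IsFrame φ m M)
    {U : H →L[ℂ] ℓ²} (hU : IsAnalysis φ U) (f : H) : Real.sqrt m * ‖f‖ ≤ ‖U f‖ := by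
  have h := Real.sqrt_le_sqrt ((hΦ.2.2 f).1.trans_eq (hU.norm_sq_apply f).symm)
  rwa [Real.sqrt_mul' _ (sq_nonneg _), Real.sqrt_sq (norm_nonneg _),
    Real.sqrt_sq (norm_nonneg _)] at h

namespace ContinuousLinearMap

variable {𝕜 E F : Type*} [RCLike 𝕜] [NormedAddCommGroup E] [NormedSpace 𝕜 E]

theorem sub_mul_norm_le_norm_apply_of_norm_sub_le [NormedAddCommGroup F] [NormedSpace 𝕜 F]
    {U V : E →L[𝕜] F} {b μ : ℝ} (hU : ∀ f, b * ‖f‖ ≤ ‖U f‖) (hUV : ‖U - V‖ ≤ μ) (f : E) :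
    (b - μ) * ‖f‖ ≤ ‖V f‖ :=
  calc (b - μ) * ‖f‖ = b * ‖f‖ - μ * ‖f‖ := sub_mul _ _ _
    _ ≤ ‖U f‖ - ‖(U - V) f‖ := sub_le_sub (hU f) (le_of_opNorm_le _ hUV f)
    _ ≤ ‖V f‖ := by rw [sub_apply]; linarith [norm_sub_norm_le (U f) (V f)]

theorem norm_sub_starProjection_le_of_mem_closure_range [NormedAddCommGroup F]
    [InnerProductSpace 𝕜 F] [CompleteSpace F] {U V : E →L[𝕜] F} {b μ : ℝ} (hb : 0 < b)
    (hV : ∀ f, b * ‖f‖ ≤ ‖V f‖) (hUV : ‖U - V‖ ≤ μ) :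
    ∀ x ∈ (LinearMap.range (V : E →ₗ[𝕜] F)).topologicalClosure,
      ‖x - (LinearMap.range (U : E →ₗ[𝕜] F)).topologicalClosure.starProjection x‖ ≤
        μ / b * ‖x‖ := by
  set K := (LinearMap.range (U : E →ₗ[𝕜] F)).topologicalClosure
  set P := K.starProjection
  have hrange : ∀ f, ‖V f - P (V f)‖ ≤ μ / b * ‖V f‖ := fun f =>
    calc ‖V f - P (V f)‖ ≤ ‖V f - U f‖ := by
          rw [Submodule.starProjection_minimal]
          exact ciInf_le ⟨0, Set.forall_mem_range.mpr fun _ => norm_nonneg _⟩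
            (⟨U f, Submodule.le_topologicalClosure _ ⟨f, rfl⟩⟩ : K)
      _ = ‖(U - V) f‖ := by rw [norm_sub_rev, sub_apply]
      _ ≤ μ * ‖f‖ := le_of_opNorm_le _ hUV f
      _ = μ / b * (b * ‖f‖) := by field_simp
      _ ≤ μ / b * ‖V f‖ :=
        mul_le_mul_of_nonneg_left (hV f) (div_nonneg ((norm_nonneg _).trans hUV) hb.le)
  intro x hx
  rw [← SetLike.mem_coe, Submodule.topologicalClosure_coe] at hx
  refine closure_minimal (t := {x | ‖x - P x‖ ≤ μ / b * ‖x‖}) ?_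
    (isClosed_le (continuous_id.sub P.continuous).norm (continuous_const.mul continuous_norm)) hx
  rintro _ ⟨f, rfl⟩
  exact hrange f

end ContinuousLinearMap

theorem stmt4_general
    (φ : ℕ → H) (mΦ MΦ μ : ℝ)
    (UΦ UΨ : H →L[ℂ] ℓ²) (TΦ TΨ : ℓ² →L[ℂ] H)
    (hUΦ : IsAnalysis φ UΦ)
    (hTΦ : TΦ = adjoint UΦ) (hTΨ : TΨ = adjoint UΨ)
    (hΦ : IsFrame φ mΦ MΦ)
    (hμ : μ < Real.sqrt mΦ) (hper : ‖TΦ - TΨ‖ ≤ μ) :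
    ‖orthProj ((LinearMap.range (UΦ : H →ₗ[ℂ] ℓ²)).topologicalClosure)
        (Submodule.isClosed_topologicalClosure _) -
      orthProj ((LinearMap.range (UΨ : H →ₗ[ℂ] ℓ²)).topologicalClosure)
        (Submodule.isClosed_topologicalClosure _)‖
      ≤ μ / (Real.sqrt mΦ - μ) := by
  have hgap : 0 < Real.sqrt mΦ - μ := sub_pos.mpr hμ
  have hUΦΨ : ‖UΦ - UΨ‖ ≤ μ := by
    rwa [hTΦ, hTΨ, ← map_sub, LinearIsometryEquiv.norm_map] at hper
  have hμ0 : 0 ≤ μ := (norm_nonneg _).trans hUΦΨ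
  have hlowΦ : ∀ f, (Real.sqrt mΦ - μ) * ‖f‖ ≤ ‖UΦ f‖ := fun f =>
    (mul_le_mul_of_nonneg_right (by linarith) (norm_nonneg f)).trans
      (hΦ.sqrt_mul_norm_le_norm_apply hUΦ f)
  have hlowΨ : ∀ f, (Real.sqrt mΦ - μ) * ‖f‖ ≤ ‖UΨ f‖ :=
    sub_mul_norm_le_norm_apply_of_norm_sub_le (hΦ.sqrt_mul_norm_le_norm_apply hUΦ) hUΦΨ
  rw [orthProj_eq_starProjection, orthProj_eq_starProjection]
  refine Submodule.norm_starProjection_sub_starProjection_le (div_nonneg hμ0 hgap.le) ?_ ?_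
  · exact norm_sub_starProjection_le_of_mem_closure_range hgap hlowΦ (by rwa [norm_sub_rev])
  · exact norm_sub_starProjection_le_of_mem_closure_range hgap hlowΨ hUΦΨ

theorem stmt4
    (φ ψ : ℕ → H) (mΦ MΦ MΨ μ : ℝ)
    (UΦ UΨ : H →L[ℂ] ℓ²) (TΦ TΨ : ℓ² →L[ℂ] H)
    (hUΦ : IsAnalysis φ UΦ) (hUΨ : IsAnalysis ψ UΨ)
    (hTΦ : TΦ = adjoint UΦ) (hTΨ : TΨ = adjoint UΨ)
    (hΦ : IsFrame φ mΦ MΦ) (hΨ : IsBessel ψ MΨ)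
    (hμ : μ < Real.sqrt mΦ) (hper : ‖TΦ - TΨ‖ ≤ μ) :
    ‖orthProj ((LinearMap.range (UΦ : H →ₗ[ℂ] ℓ²)).topologicalClosure)
        (Submodule.isClosed_topologicalClosure _) -
      orthProj ((LinearMap.range (UΨ : H →ₗ[ℂ] ℓ²)).topologicalClosure)
        (Submodule.isClosed_topologicalClosure _)‖
      ≤ μ / (Real.sqrt mΦ - μ) :=
  stmt4_general φ mΦ MΦ μ UΦ UΨ TΦ TΨ hUΦ hTΦ hTΨ hΦ hμ hper

end
end

section
/- With the notation of the previous setting (Φ a frame, Ψ a μ-perturbation with μ < √m_Φ, Θ_ba = P_{ker T_Ψ} U_{Φ_Θ^{ad}(A₁)}), the approximately dual Ψ_{Θ_ba}^{ad}(A₂) is a best approximation of Φ_Θ^{ad}(A₁) among approximately duals of Ψ: for every Λ ∈ B(H, ℓ²) with T_Ψ Λ = 0, ‖T_{Ψ_{Θ_ba}^{ad}(A₂)} − T_{Φ_Θ^{ad}(A₁)}‖ ≤ ‖T_{Ψ_Λ^{ad}(A₂)} − T_{Φ_Θ^{ad}(A₁)}‖. -/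
open ContinuousLinearMap MeasureTheory
open scoped InnerProductSpace ComplexConjugate

noncomputable section

variable {H : Type} [NormedAddCommGroup H] [InnerProductSpace ℂ H] [CompleteSpace H]

/-! Let `P` be the orthogonal projection onto `ker T_Ψ`. Composing with `P` kills
`A₂* S_Ψ⁻¹ T_Ψ`, fixes every `Λ*` with `T_Ψ Λ = 0`, and sends `D_Φ` to `D_Φ P = Θ_ba*`.
Hence, with `V = A₂* S_Ψ⁻¹ T_Ψ + Λ* - D_Φ`, the operator for `Θ_ba` is `V - V P = V P^⊥`,
whose norm is at most `‖V‖` since `‖P^⊥‖ ≤ 1`. -/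

namespace Submodule

variable {𝕜 E F G : Type*} [RCLike 𝕜] [NormedAddCommGroup E] [InnerProductSpace 𝕜 E]
  [SeminormedAddCommGroup F] [NormedSpace 𝕜 F] [NormedAddCommGroup G] [InnerProductSpace 𝕜 G]

theorem comp_starProjection_ker (T : E →L[𝕜] F)
    [(LinearMap.ker (T : E →ₗ[𝕜] F)).HasOrthogonalProjection] :
    T ∘L (LinearMap.ker (T : E →ₗ[𝕜] F)).starProjection = 0 :=
  ContinuousLinearMap.ext fun x =>
    LinearMap.mem_ker.mp ((LinearMap.ker (T : E →ₗ[𝕜] F)).starProjection_apply_mem x)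

variable (K : Submodule 𝕜 E) [K.HasOrthogonalProjection]

theorem starProjection_comp_of_range_le {Λ : F →L[𝕜] E}
    (h : LinearMap.range (Λ : F →ₗ[𝕜] E) ≤ K) : K.starProjection ∘L Λ = Λ :=
  ContinuousLinearMap.ext fun x => starProjection_eq_self_iff.mpr (h ⟨x, rfl⟩)

theorem norm_sub_comp_starProjection_le (V : E →L[𝕜] F) :
    ‖V - V ∘L K.starProjection‖ ≤ ‖V‖ :=
  calc ‖V - V ∘L K.starProjection‖ = ‖V ∘L Kᗮ.starProjection‖ := by
        rw [starProjection_orthogonal', ContinuousLinearMap.comp_sub]; rfl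
    _ ≤ ‖V‖ * ‖Kᗮ.starProjection‖ := V.opNorm_comp_le _
    _ ≤ ‖V‖ := mul_le_of_le_one_right (norm_nonneg V) (starProjection_norm_le Kᗮ)

theorem norm_add_adjoint_starProjection_comp_sub_le [CompleteSpace E] [CompleteSpace G]
    {B D : E →L[𝕜] G} {Λ : G →L[𝕜] E}
    (hB : B ∘L K.starProjection = 0) (hΛ : LinearMap.range (Λ : G →ₗ[𝕜] E) ≤ K) :
    ‖B + adjoint (K.starProjection ∘L adjoint D) - D‖ ≤ ‖B + adjoint Λ - D‖ := by
  have hP : adjoint K.starProjection = K.starProjection :=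
    (isSelfAdjoint_starProjection K).adjoint_eq
  have hΛP : adjoint Λ ∘L K.starProjection = adjoint Λ := by
    rw [← hP, ← adjoint_comp, starProjection_comp_of_range_le K hΛ]
  have hDP : adjoint (K.starProjection ∘L adjoint D) = D ∘L K.starProjection := by
    rw [adjoint_comp, adjoint_adjoint, hP]
  calc ‖B + adjoint (K.starProjection ∘L adjoint D) - D‖
      = ‖(B + adjoint Λ - D) - (B + adjoint Λ - D) ∘L K.starProjection‖ := by
        rw [hDP, sub_comp, add_comp, hB, hΛP]; abel_nf
    _ ≤ ‖B + adjoint Λ - D‖ := norm_sub_comp_starProjection_le K _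

end Submodule

theorem stmt14_general
    (TΨ : ℓ² →L[ℂ] H)
    (SΨinv A2 : H →L[ℂ] H)
    (DΦ : ℓ² →L[ℂ] H)
    (Θba : H →L[ℂ] ℓ²)
    (hΘba : Θba = orthProj (LinearMap.ker (TΨ : ℓ² →ₗ[ℂ] H)) (ContinuousLinearMap.isClosed_ker TΨ) ∘L adjoint DΦ) :
    ∀ Λ : H →L[ℂ] ℓ², TΨ ∘L Λ = 0 →
      ‖(adjoint A2 ∘L (SΨinv ∘L TΨ) + adjoint Θba) - DΦ‖ ≤
        ‖(adjoint A2 ∘L (SΨinv ∘L TΨ) + adjoint Λ) - DΦ‖ := by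
  intro Λ hΛ
  have := (isClosed_ker TΨ).completeSpace_coe
  subst hΘba
  refine Submodule.norm_add_adjoint_starProjection_comp_sub_le _ ?_ ?_
  · rw [comp_assoc, comp_assoc, Submodule.comp_starProjection_ker, comp_zero, comp_zero]
  · exact LinearMap.range_le_ker_iff.mpr congr(ContinuousLinearMap.toLinearMap $hΛ)

theorem stmt14
    (φ ψ : ℕ → H) (mΦ MΦ MΨ μ : ℝ)
    (UΦ UΨ : H →L[ℂ] ℓ²) (TΦ TΨ : ℓ² →L[ℂ] H)
    (SΦ SΦinv SΨ SΨinv A1 A2 : H →L[ℂ] H) (Θ : H →L[ℂ] ℓ²)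
    (hUΦ : IsAnalysis φ UΦ) (hUΨ : IsAnalysis ψ UΨ)
    (hTΦ : TΦ = adjoint UΦ) (hTΨ : TΨ = adjoint UΨ)
    (hSΦ : SΦ = TΦ ∘L UΦ) (hSΨ : SΨ = TΨ ∘L UΨ)
    (hSΦ1 : SΦ ∘L SΦinv = ContinuousLinearMap.id ℂ H)
    (hSΦ2 : SΦinv ∘L SΦ = ContinuousLinearMap.id ℂ H)
    (hSΨ1 : SΨ ∘L SΨinv = ContinuousLinearMap.id ℂ H)
    (hSΨ2 : SΨinv ∘L SΨ = ContinuousLinearMap.id ℂ H)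
    (hΦ : IsFrame φ mΦ MΦ) (hΨ : IsBessel ψ MΨ)
    (hμ : μ < Real.sqrt mΦ) (hper : ‖TΦ - TΨ‖ ≤ μ)
    (hA1 : ‖ContinuousLinearMap.id ℂ H - A1‖ < 1)
    (hA2 : ‖ContinuousLinearMap.id ℂ H - A2‖ < 1)
    (hΘ : TΦ ∘L Θ = 0)
    (DΦ : ℓ² →L[ℂ] H) (hDΦ : DΦ = adjoint A1 ∘L (SΦinv ∘L TΦ) + adjoint Θ)
    (Θba : H →L[ℂ] ℓ²)
    (hΘba : Θba = orthProj (LinearMap.ker (TΨ : ℓ² →ₗ[ℂ] H)) (ContinuousLinearMap.isClosed_ker TΨ) ∘L adjoint DΦ) :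
    ∀ Λ : H →L[ℂ] ℓ², TΨ ∘L Λ = 0 →
      ‖(adjoint A2 ∘L (SΨinv ∘L TΨ) + adjoint Θba) - DΦ‖ ≤
        ‖(adjoint A2 ∘L (SΨinv ∘L TΨ) + adjoint Λ) - DΦ‖ :=
  stmt14_general TΨ SΨinv A2 DΦ Θba hΘba

end
end
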